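/- arXiv:1512.01379 — 2 statements merged into one kernel-verified Lean document; each statement's English description precedes it below -/
import Mathlib

section
/- There exists a constant C > 0 (depending only on λ > 0) such that for all k ∈ ℕ and all t > 0, 0 ≤ e^{-2t} · t^{-λ} · I_{λ+k}(2t) ≤ C / (k+1)^{2λ+1}, where I_ν is the modified Bessel function of the first kind. -/
/-!
Expanding the series, `e^{-2t} t^{-λ} I_{λ+k}(2t) = e^{-2t} ∑ⱼ t^{k+2j} / (j! Γ(λ+k+j+1))`.
Compare the `j`-th term with the `m`-th Poisson weight `e^{-2t} (2t)^m / m!`, `m = k + 2j`; these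
weights sum to `1`. Since `m! = C(m, j) j! (k+j)!`, the ratio of the two terms is
`C(m, j) 2^{-m} (k+j)! / Γ(λ+k+j+1)`. Log-convexity of `Γ` bounds `(k+j)! / Γ(λ+k+j+1)` by
`2 (k+j+1)^{-λ}`. As `j` lies `k/2` below the middle of row `m`,
`C(m, j) 2^{-m} ≲ (m+1)^{-1/2} exp(-(k+1)² / (8(m+1)))`, and this Gaussian factor absorbs
`(k+1)^{2λ+1} / (m+1)^{λ+1/2}`.
-/

open Real

/-- The modified Bessel function of the first kind of order `ν`. -/
noncomputable def besselI (ν : ℝ) (z : ℝ) : ℝ :=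
  ∑' k : ℕ, (z / 2) ^ (ν + 2 * (k : ℝ)) / ((k.factorial : ℝ) * Real.Gamma (ν + k + 1))

open Nat

namespace Real

theorem Gamma_mul_rpow_le_of_lt_one {x f : ℝ} (hx : 1 ≤ x) (hf₀ : 0 ≤ f) (hf₁ : f < 1) :
    Gamma x * x ^ f ≤ 2 * Gamma (x + f) := by
  have hx₀ : 0 < x := by linarith
  rcases hf₀.eq_or_lt with rfl | hf₀
  · simp only [rpow_zero, mul_one, add_zero]; linarith [Gamma_pos_of_pos hx₀]
  have hxf : 0 < x + f := by linarith
  have hΓ := Gamma_pos_of_pos hxf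
  -- log-convexity at `x + 1 = f (x + f) + (1 - f) (x + f + 1)`
  have hconv : x * Gamma x ≤ Gamma (x + f) * (x + f) ^ (1 - f) := by
    have h := Gamma_mul_add_mul_le_rpow_Gamma_mul_rpow_Gamma hxf (by linarith : 0 < x + f + 1)
      hf₀ (sub_pos.2 hf₁) (add_sub_cancel f 1)
    have hΓf : Gamma (x + f) ^ f * Gamma (x + f) ^ (1 - f) = Gamma (x + f) := by
      rw [← rpow_add hΓ]; simp
    rw [show f * (x + f) + (1 - f) * (x + f + 1) = x + 1 by ring, Gamma_add_one hxf.ne',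
      mul_rpow hxf.le hΓ.le, Gamma_add_one hx₀.ne'] at h
    exact h.trans_eq (by rw [mul_left_comm, hΓf, mul_comm])
  have hratio : (x + f) ^ (1 - f) ≤ 2 * x ^ (1 - f) :=
    calc (x + f) ^ (1 - f) ≤ (2 * x) ^ (1 - f) := by gcongr; linarith
      _ = 2 ^ (1 - f) * x ^ (1 - f) := mul_rpow zero_le_two hx₀.le
      _ ≤ 2 * x ^ (1 - f) := by
        gcongr; exact rpow_le_self_of_one_le one_le_two (by linarith)
  have hsplit : x ^ f * x ^ (1 - f) = x := by rw [← rpow_add hx₀]; simp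
  refine le_of_mul_le_mul_right ?_ (rpow_pos_of_pos hx₀ (1 - f))
  calc Gamma x * x ^ f * x ^ (1 - f) = x * Gamma x := by rw [mul_assoc, hsplit, mul_comm]
    _ ≤ Gamma (x + f) * (2 * x ^ (1 - f)) := hconv.trans (by gcongr)
    _ = 2 * Gamma (x + f) * x ^ (1 - f) := by ring

theorem Gamma_mul_rpow_le {x d : ℝ} (hx : 1 ≤ x) (hd : 0 ≤ d) :
    Gamma x * x ^ d ≤ 2 * Gamma (x + d) := by
  have hx₀ : 0 < x := by linarith
  set f := d - ⌊d⌋₊ with hf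
  have hf₀ : 0 ≤ f := sub_nonneg.2 (Nat.floor_le hd)
  have hf₁ : f < 1 := by have := Nat.lt_floor_add_one d; linarith
  have key : ∀ n : ℕ, Gamma x * x ^ (n + f) ≤ 2 * Gamma (x + (n + f)) := by
    intro n
    induction n with
    | zero => simpa using Gamma_mul_rpow_le_of_lt_one hx hf₀ hf₁
    | succ n ih =>
      have hpos : 0 < x + (n + f) := by positivity
      calc Gamma x * x ^ ((n + 1 : ℕ) + f) = x * (Gamma x * x ^ ((n : ℝ) + f)) := by
            rw [show ((n + 1 : ℕ) : ℝ) + f = (n + f) + 1 by push_cast; ring, rpow_add_one hx₀.ne']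
            ring
        _ ≤ (x + (n + f)) * (2 * Gamma (x + (n + f))) := by gcongr; linarith
        _ = 2 * Gamma (x + ((n + 1 : ℕ) + f)) := by
            rw [show x + ((n + 1 : ℕ) + f) = (x + (n + f)) + 1 by push_cast; ring,
              Gamma_add_one hpos.ne']
            ring
  simpa [hf] using key ⌊d⌋₊

theorem rpow_le_rpow_self_mul_exp {u q : ℝ} (hu : 0 < u) (hq : 0 < q) :
    u ^ q ≤ q ^ q * exp u := by
  have hlog : q * log u ≤ q * log q + u := by
    have h := log_le_sub_one_of_pos (div_pos hu hq)
    rw [log_div hu.ne' hq.ne', le_sub_iff_add_le, div_eq_mul_inv] at h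
    have := mul_le_mul_of_nonneg_left h hq.le
    field_simp at this ⊢
    linarith
  calc u ^ q = exp (q * log u) := by rw [rpow_def_of_pos hu, mul_comm]
    _ ≤ exp (q * log q + u) := exp_le_exp.2 hlog
    _ = q ^ q * exp u := by rw [exp_add, rpow_def_of_pos hq, mul_comm (log q)]

end Real

theorem factorial_mul_rpow_le_Gamma {l : ℝ} (hl : 0 ≤ l) (n : ℕ) :
    n ! * ((n : ℝ) + 1) ^ l ≤ 2 * Gamma (l + n + 1) := by
  have h := Gamma_mul_rpow_le (x := n + 1) (by simp) hl
  rwa [Gamma_nat_eq_factorial, show (n : ℝ) + 1 + l = l + n + 1 by ring] at h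

namespace Nat

theorem centralBinom_sq_mul_le (n : ℕ) : centralBinom n ^ 2 * (2 * n + 1) ≤ 2 * 16 ^ n := by
  induction n with
  | zero => simp
  | succ n ih =>
    refine Nat.le_of_mul_le_mul_left ?_ (by positivity : 0 < (n + 1) ^ 2)
    calc (n + 1) ^ 2 * (centralBinom (n + 1) ^ 2 * (2 * (n + 1) + 1))
        = centralBinom n ^ 2 * (2 * n + 1) * (4 * (2 * n + 1) * (2 * n + 3)) := by
          rw [← mul_assoc, ← mul_pow, succ_mul_centralBinom_succ]; ring
      _ ≤ 2 * 16 ^ n * (4 * (2 * n + 2) * (2 * n + 2)) := Nat.mul_le_mul ih (by nlinarith)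
      _ = (n + 1) ^ 2 * (2 * 16 ^ (n + 1)) := by ring

theorem choose_half_sq_mul_le (m : ℕ) : m.choose (m / 2) ^ 2 * (m + 1) ≤ 2 * 4 ^ m := by
  obtain ⟨n, rfl | rfl⟩ := even_or_odd' m
  · have h := centralBinom_sq_mul_le n
    rw [centralBinom] at h
    rwa [Nat.mul_div_cancel_left n two_pos, pow_mul, show 4 ^ 2 = 16 by rfl]
  · have hpascal : centralBinom (n + 1) = 2 * (2 * n + 1).choose n := by
      rw [centralBinom, show 2 * (n + 1) = 2 * n + 1 + 1 by ring, choose_succ_succ',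
        ← choose_symm_half n]
      omega
    have h := centralBinom_sq_mul_le (n + 1)
    rw [hpascal] at h
    rw [show (2 * n + 1) / 2 = n by omega]
    refine Nat.le_of_mul_le_mul_left ?_ (by norm_num : 0 < 4)
    calc 4 * ((2 * n + 1).choose n ^ 2 * (2 * n + 1 + 1))
        ≤ (2 * (2 * n + 1).choose n) ^ 2 * (2 * (n + 1) + 1) := by rw [mul_pow]; ring_nf; omega
      _ ≤ 2 * 16 ^ (n + 1) := h
      _ = 4 * (2 * 4 ^ (2 * n + 1)) := by rw [show 16 = 4 ^ 2 by rfl, ← pow_mul]; ring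

theorem choose_mul_sqrt_le (m j : ℕ) : (m.choose j : ℝ) * √(m + 1) ≤ 2 * 2 ^ m := by
  have hsq : ((m.choose (m / 2) : ℝ) * √(m + 1)) ^ 2 ≤ (2 * 2 ^ m) ^ 2 := by
    rw [mul_pow, sq_sqrt (by positivity), mul_pow, ← pow_mul, mul_comm m 2, pow_mul]
    exact_mod_cast (choose_half_sq_mul_le m).trans (by norm_num)
  calc (m.choose j : ℝ) * √(m + 1) ≤ m.choose (m / 2) * √(m + 1) := by
        gcongr; exact choose_le_middle j m
    _ ≤ 2 * 2 ^ m := (pow_le_pow_iff_left₀ (by positivity) (by positivity) two_ne_zero).1 hsq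

theorem choose_sub_le_choose_mul_exp {m c d : ℕ} (hc : 2 * c ≤ m) (hd : d ≤ c) :
    (m.choose (c - d) : ℝ) ≤ m.choose c * exp (-(d : ℝ) ^ 2 / (m + 1)) := by
  induction d with
  | zero => simp
  | succ d ih =>
    have hM : (0 : ℝ) < m + 1 := by positivity
    -- one step down from the middle costs the factor `(c - d) / (c + d + 1)`
    have hstep : (m.choose (c - (d + 1)) : ℝ) * (c + d + 1) ≤ m.choose (c - d) * (c - d) := by
      have h := choose_succ_right_eq m (c - (d + 1))
      rw [show c - (d + 1) + 1 = c - d by omega] at h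
      have h' : (m.choose (c - d) : ℝ) * ((c - d : ℕ) : ℝ) =
          (m.choose (c - (d + 1)) : ℝ) * ((m - (c - (d + 1)) : ℕ) : ℝ) := by
        exact_mod_cast h
      push_cast [show d + 1 ≤ c by omega, show c - (d + 1) ≤ m by omega, show d ≤ c by omega] at h'
      rw [h']
      gcongr
      have : (c : ℝ) + c ≤ m := by exact_mod_cast (by omega : c + c ≤ m)
      linarith
    have hfactor : ((c : ℝ) - d) / (c + d + 1) ≤ exp (-(2 * d + 1) / (m + 1)) := by
      have hcm : (c : ℝ) + d + 1 ≤ m + 1 := by exact_mod_cast (by omega : c + d + 1 ≤ m + 1)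
      calc ((c : ℝ) - d) / (c + d + 1) = 1 - (2 * d + 1) / (c + d + 1) := by field_simp; ring
        _ ≤ 1 - (2 * d + 1) / (m + 1) := by gcongr
        _ ≤ exp (-(2 * d + 1) / (m + 1)) := by rw [neg_div]; exact one_sub_le_exp_neg _
    calc (m.choose (c - (d + 1)) : ℝ)
        ≤ m.choose (c - d) * (((c : ℝ) - d) / (c + d + 1)) := by
          rw [mul_div_assoc', le_div_iff₀ (by positivity)]; exact hstep
      _ ≤ m.choose c * exp (-(d : ℝ) ^ 2 / (m + 1)) * exp (-(2 * d + 1) / (m + 1)) := by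
          gcongr
          · have : (d : ℝ) ≤ c := by exact_mod_cast (by omega : d ≤ c)
            exact div_nonneg (by linarith) (by positivity)
          · exact ih (by omega)
      _ = m.choose c * exp (-((d + 1 : ℕ) : ℝ) ^ 2 / (m + 1)) := by
          rw [mul_assoc, ← exp_add]; congr 2; push_cast; ring

theorem choose_add_two_mul_mul_rpow_le {q : ℝ} (hq : 0 < q) (k j : ℕ) :
    ((k + 2 * j).choose j : ℝ) * ((k : ℝ) + 1) ^ (2 * q) ≤
      2 * exp 1 * (8 * q) ^ q * 2 ^ (k + 2 * j) * ((k + 2 * j : ℕ) + 1 : ℝ) ^ (q - 1 / 2) := by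
  set m := k + 2 * j
  set M : ℝ := (m : ℝ) + 1 with hM
  have hM₁ : 1 ≤ M := by simp [hM]
  have hM₀ : 0 < M := by linarith
  set d := k / 2
  have hchoose : (m.choose j : ℝ) ≤ m.choose (j + d) * exp (-(d : ℝ) ^ 2 / M) := by
    simpa using choose_sub_le_choose_mul_exp (m := m) (c := j + d) (d := d) (by omega) (by omega)
  -- the Gaussian factor absorbs `u ^ q` up to a constant
  set u : ℝ := ((k : ℝ) + 1) ^ 2 / (8 * M) with hu
  have hu₀ : 0 < u := by positivity
  have hgauss : exp (-(d : ℝ) ^ 2 / M) * exp u ≤ exp 1 := by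
    rw [← exp_add, exp_le_exp]
    have hk : (k : ℝ) + 1 ≤ 2 * (d + 1) := by exact_mod_cast (by omega : k + 1 ≤ 2 * (d + 1))
    have : ((k : ℝ) + 1) ^ 2 ≤ 8 * (d ^ 2 + 1) :=
      calc ((k : ℝ) + 1) ^ 2 ≤ (2 * (d + 1)) ^ 2 := by gcongr
        _ ≤ 8 * ((d : ℝ) ^ 2 + 1) := by nlinarith [sq_nonneg ((d : ℝ) - 1)]
    calc -(d : ℝ) ^ 2 / M + u ≤ -(d : ℝ) ^ 2 / M + 8 * (d ^ 2 + 1) / (8 * M) := by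
          rw [hu]; gcongr
      _ = 1 / M := by field_simp; ring
      _ ≤ 1 := by rw [div_le_one hM₀]; exact hM₁
  have hpow : ((k : ℝ) + 1) ^ (2 * q) = (8 * M) ^ q * u ^ q := by
    rw [← mul_rpow (by positivity) hu₀.le, hu, mul_div_cancel₀ _ (by positivity),
      rpow_mul (by positivity)]
    norm_cast
  have hMq : (8 * M) ^ q * q ^ q = (8 * q) ^ q * M ^ (q - 1 / 2) * √M := by
    rw [sqrt_eq_rpow, mul_assoc, ← rpow_add hM₀, sub_add_cancel, ← mul_rpow (by positivity) hq.le,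
      ← mul_rpow (by positivity) hM₀.le]
    ring_nf
  calc (m.choose j : ℝ) * ((k : ℝ) + 1) ^ (2 * q)
      ≤ m.choose (j + d) * exp (-(d : ℝ) ^ 2 / M) * ((8 * M) ^ q * (q ^ q * exp u)) := by
        rw [hpow]; gcongr; exact rpow_le_rpow_self_mul_exp hu₀ hq
    _ = m.choose (j + d) * ((8 * M) ^ q * q ^ q) * (exp (-(d : ℝ) ^ 2 / M) * exp u) := by ring
    _ ≤ m.choose (j + d) * ((8 * q) ^ q * M ^ (q - 1 / 2) * √M) * exp 1 := by
        rw [hMq]; gcongr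
    _ = (m.choose (j + d) * √M) * (exp 1 * (8 * q) ^ q * M ^ (q - 1 / 2)) := by ring
    _ ≤ (2 * 2 ^ m) * (exp 1 * (8 * q) ^ q * M ^ (q - 1 / 2)) :=
        mul_le_mul_of_nonneg_right (choose_mul_sqrt_le m (j + d)) (by positivity)
    _ = 2 * exp 1 * (8 * q) ^ q * 2 ^ m * M ^ (q - 1 / 2) := by ring

end Nat

theorem exists_one_div_factorial_mul_Gamma_le {l : ℝ} (hl : 0 ≤ l) :
    ∃ C > 0, ∀ k j : ℕ, 1 / (j ! * Gamma (l + k + j + 1)) ≤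
      C / ((k : ℝ) + 1) ^ (2 * l + 1) * (2 ^ (k + 2 * j) / (k + 2 * j)!) := by
  set q := l + 1 / 2
  set A := 2 * exp 1 * (8 * q) ^ q
  refine ⟨2 ^ (l + 1) * A, by positivity, fun k j => ?_⟩
  have hΓ : 0 < Gamma (l + k + j + 1) := Gamma_pos_of_pos (by positivity)
  have hfac : ((k + 2 * j)! : ℝ) = (k + 2 * j).choose j * j ! * (k + j)! := by
    rw [← choose_mul_factorial_mul_factorial (by omega : j ≤ k + 2 * j),
      show k + 2 * j - j = k + j by omega]
    push_cast; ring
  have hbinom := choose_add_two_mul_mul_rpow_le (q := q) (by positivity) k j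
  rw [show q - 1 / 2 = l by ring, show 2 * q = 2 * l + 1 by ring] at hbinom
  have hmiddle : ((k + 2 * j : ℕ) + 1 : ℝ) ^ l ≤ 2 ^ l * ((k + j : ℕ) + 1 : ℝ) ^ l := by
    rw [← mul_rpow zero_le_two (by positivity)]
    gcongr
    push_cast; linarith [(j.cast_nonneg : (0 : ℝ) ≤ j)]
  have hgamma := factorial_mul_rpow_le_Gamma hl (k + j)
  rw [_root_.div_mul_div_comm, div_le_div_iff₀ (by positivity) (by positivity), one_mul]
  calc ((k : ℝ) + 1) ^ (2 * l + 1) * ((k + 2 * j)! : ℝ)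
      = (k + 2 * j).choose j * ((k : ℝ) + 1) ^ (2 * l + 1) * (j ! * (k + j)!) := by
        rw [hfac]; ring
    _ ≤ A * 2 ^ (k + 2 * j) * (2 ^ l * ((k + j : ℕ) + 1 : ℝ) ^ l) * (j ! * (k + j)!) :=
        mul_le_mul_of_nonneg_right (hbinom.trans (by gcongr)) (by positivity)
    _ = 2 ^ l * A * 2 ^ (k + 2 * j) * j ! * ((k + j)! * ((k + j : ℕ) + 1 : ℝ) ^ l) := by ring
    _ ≤ 2 ^ l * A * 2 ^ (k + 2 * j) * j ! * (2 * Gamma (l + (k + j : ℕ) + 1)) := by gcongr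
    _ = 2 ^ (l + 1) * A * 2 ^ (k + 2 * j) * (j ! * Gamma (l + k + j + 1)) := by
        rw [rpow_add_one two_ne_zero]; push_cast; ring_nf

theorem rpow_neg_mul_besselI {t : ℝ} (ht : 0 < t) (μ : ℝ) (n : ℕ) :
    t ^ (-μ) * besselI (μ + n) (2 * t) =
      ∑' j : ℕ, t ^ (n + 2 * j) / (j ! * Gamma (μ + n + j + 1)) := by
  rw [besselI, ← tsum_mul_left]
  congr 1 with j
  rw [mul_div_cancel_left₀ t two_ne_zero, ← mul_div_assoc, ← rpow_add ht, ← rpow_natCast]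
  push_cast; ring_nf

theorem tsum_le_mul_exp_of_le_pow_div_factorial {a : ℕ → ℝ} {e : ℕ → ℕ} (he : e.Injective)
    {K x : ℝ} (hK : 0 ≤ K) (hx : 0 ≤ x) (ha₀ : ∀ j, 0 ≤ a j)
    (ha : ∀ j, a j ≤ K * (x ^ e j / (e j)!)) : ∑' j, a j ≤ K * exp x := by
  have hexp : HasSum (fun n => K * (x ^ n / n !)) (K * exp x) := by
    rw [exp_eq_exp_ℝ]; exact (NormedSpace.expSeries_div_hasSum_exp x).mul_left K
  rw [← hexp.tsum_eq]
  exact Summable.tsum_le_tsum_of_inj e he (fun n _ => by positivity) ha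
    (.of_nonneg_of_le ha₀ ha (hexp.summable.comp_injective he)) hexp.summable

theorem besselI_heat_kernel_bound (l : ℝ) (hl : 0 < l) :
    ∃ C : ℝ, 0 < C ∧ ∀ (k : ℕ) (t : ℝ), 0 < t →
      0 ≤ Real.exp (-2 * t) * t ^ (-l) * besselI (l + k) (2 * t) ∧
      Real.exp (-2 * t) * t ^ (-l) * besselI (l + k) (2 * t) ≤ C / ((k : ℝ) + 1) ^ (2 * l + 1) := by
  obtain ⟨C, hC, hcoef⟩ := exists_one_div_factorial_mul_Gamma_le hl.le
  refine ⟨C, hC, fun k t ht => ?_⟩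
  set K := C / ((k : ℝ) + 1) ^ (2 * l + 1)
  have hΓ (j : ℕ) : 0 < Gamma (l + k + j + 1) := Gamma_pos_of_pos (by positivity)
  have hterm (j : ℕ) : t ^ (k + 2 * j) / (j ! * Gamma (l + k + j + 1)) ≤
      K * ((2 * t) ^ (k + 2 * j) / (k + 2 * j)!) :=
    calc t ^ (k + 2 * j) / (j ! * Gamma (l + k + j + 1))
        = t ^ (k + 2 * j) * (1 / (j ! * Gamma (l + k + j + 1))) := by ring
      _ ≤ t ^ (k + 2 * j) * (K * (2 ^ (k + 2 * j) / (k + 2 * j)!)) := by gcongr; exact hcoef k j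
      _ = _ := by rw [mul_pow]; ring
  have hsum := tsum_le_mul_exp_of_le_pow_div_factorial (e := fun j => k + 2 * j)
    (fun a b h => by simpa using h) (by positivity) (by positivity)
    (fun j => by have := hΓ j; positivity) hterm
  rw [mul_assoc, rpow_neg_mul_besselI ht]
  refine ⟨mul_nonneg (exp_pos _).le (tsum_nonneg fun j => by have := hΓ j; positivity), ?_⟩
  calc exp (-2 * t) * ∑' j : ℕ, t ^ (k + 2 * j) / (j ! * Gamma (l + k + j + 1))
      ≤ exp (-2 * t) * (K * exp (2 * t)) := by gcongr
    _ = K := by rw [mul_left_comm, ← exp_add]; simp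
end

section
/- Let k ∈ ℕ and let a, α, β ∈ ℝ satisfy k + 2a > β + 1 > a, k + β + 1 > 0 and k + α + 1 > 0. Then ( ∫_0^∞ t^{2k+2a-1} ( ∫_{-1}^1 e^{-2t(1+s)} (1-s)^{k+α} (1+s)^{k+β} ds )² dt )^{1/2} ≤ C · Γ(k+1) / (k+1)^{β − 2a + 2}, where C > 0 depends only on a, α, β and not on k. -/
/-!
Substituting `u = 1 + s` and using `1 - s ≤ 2 e^{-(1+s)/2}`, the inner integral is at most
`e 2^{k+α} Γ(k+β+1) (2t + c)^{-(k+β+1)}` with `c = (k+α+1)/2` (once `k + α ≥ 0`). Squaring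
and integrating against `t^{p-1}`, `p = 2k+2a`, leaves the half-line Beta integral
`∫₀^∞ t^{p-1} (2t+c)^{-(p+q)} dt = Γ(p)Γ(q) / (Γ(p+q) 2^p c^q)` with `q = 2(β+1-a) > 0`,
evaluated by writing `(2t+c)^{-(p+q)}` as a Gamma integral and applying Fubini.
Log-convexity of `Γ` gives `Γ(k+β+1) ≲ k^β Γ(k+1)` and `Γ(p)/Γ(p+q) ≤ (p-1)^{-q}`, which
yields the bound for large `k`; the finitely many remaining `k` only enlarge the constant.
-/

open Real MeasureTheory Set Filter Asymptotics

namespace Real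

lemma log_Gamma_add_one_sub {y : ℝ} (hy : 0 < y) :
    log (Gamma (y + 1)) - log (Gamma y) = log y := by
  rw [Gamma_add_one hy.ne', log_mul hy.ne' (Gamma_pos_of_pos hy).ne']
  ring

theorem Gamma_add_le_rpow_mul_Gamma {x s : ℝ} (hx : 0 < x) (hs : 0 ≤ s) :
    Gamma (x + s) ≤ (x + s) ^ s * Gamma x := by
  rcases hs.eq_or_lt with rfl | hs
  · simp
  have hxs : 0 < x + s := by linarith
  have slope := convexOn_log_Gamma.slope_mono_adjacent (x := x) (y := x + s) (z := x + s + 1)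
    hx (by simp only [mem_Ioi]; linarith) (by linarith) (by linarith)
  simp only [Function.comp, add_sub_cancel_left, div_one,
    log_Gamma_add_one_sub hxs] at slope
  rw [div_le_iff₀ hs] at slope
  rw [← log_le_log_iff (Gamma_pos_of_pos hxs) (by positivity), log_mul (by positivity)
    (Gamma_pos_of_pos hx).ne', log_rpow hxs]
  linarith

theorem rpow_mul_Gamma_le_Gamma_add {x s : ℝ} (hx : 1 < x) (hs : 0 ≤ s) :
    (x - 1) ^ s * Gamma x ≤ Gamma (x + s) := by
  rcases hs.eq_or_lt with rfl | hs
  · simp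
  have hx1 : 0 < x - 1 := by linarith
  have slope := convexOn_log_Gamma.slope_mono_adjacent (x := x - 1) (y := x) (z := x + s)
    hx1 (by simp only [mem_Ioi]; linarith) (by linarith) (by linarith)
  have hstep := log_Gamma_add_one_sub hx1
  simp only [sub_add_cancel] at hstep
  simp only [Function.comp, sub_sub_cancel, div_one, add_sub_cancel_left, hstep] at slope
  rw [le_div_iff₀ hs] at slope
  rw [← log_le_log_iff (by positivity) (Gamma_pos_of_pos (by linarith)), log_mul (by positivity)
    (Gamma_pos_of_pos (by linarith)).ne', log_rpow hx1]
  linarith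

theorem Gamma_div_Gamma_add_le {x s : ℝ} (hx : 1 < x) (hs : 0 ≤ s) :
    Gamma x / Gamma (x + s) ≤ (x - 1) ^ (-s) := by
  have hx1 : 0 < x - 1 := by linarith
  rw [div_le_iff₀ (Gamma_pos_of_pos (by linarith)), rpow_neg hx1.le, inv_mul_eq_div,
    le_div_iff₀' (by positivity)]
  exact rpow_mul_Gamma_le_Gamma_add hx hs

theorem Gamma_add_le_two_rpow_mul {y β : ℝ} (hy : 2 + 2 * |β| ≤ y) :
    Gamma (y + β) ≤ 2 ^ |β| * y ^ β * Gamma y := by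
  have hy0 : 0 < y := by linarith [abs_nonneg β]
  rcases le_or_gt 0 β with hβ | hβ
  · rw [abs_of_nonneg hβ] at hy ⊢
    calc Gamma (y + β) ≤ (y + β) ^ β * Gamma y := Gamma_add_le_rpow_mul_Gamma hy0 hβ
      _ ≤ (2 * y) ^ β * Gamma y := by gcongr; linarith
      _ = 2 ^ β * y ^ β * Gamma y := by rw [mul_rpow zero_le_two hy0.le]
  · rw [abs_of_neg hβ] at hy ⊢
    have hlow := rpow_mul_Gamma_le_Gamma_add (x := y + β) (s := -β) (by linarith) (by linarith)
    rw [add_neg_cancel_right] at hlow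
    have hpos : 0 < y + β - 1 := by linarith
    calc Gamma (y + β) = (y + β - 1) ^ β * ((y + β - 1) ^ (-β) * Gamma (y + β)) := by
          rw [← mul_assoc, ← rpow_add hpos, add_neg_cancel, rpow_zero, one_mul]
      _ ≤ (y + β - 1) ^ β * Gamma y := by gcongr
      _ ≤ (y / 2) ^ β * Gamma y := by
          gcongr ?_ * _
          exact rpow_le_rpow_of_nonpos (by positivity) (by linarith) hβ.le
      _ = 2 ^ (-β) * y ^ β * Gamma y := by
          rw [div_rpow hy0.le zero_le_two, rpow_neg zero_le_two]; ring

end Real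

section BetaIntegral

variable {p q b c : ℝ}

lemma integrableOn_rpow_mul_exp_neg_mul {s r : ℝ} (hs : 0 < s) (hr : 0 < r) :
    IntegrableOn (fun t : ℝ => t ^ (s - 1) * exp (-(r * t))) (Ioi 0) := by
  simpa [rpow_one] using
    integrableOn_rpow_mul_exp_neg_mul_rpow (by linarith : -1 < s - 1) zero_lt_one hr

lemma rpow_mul_rpow_mul_exp_neg_eq (t y : ℝ) :
    t ^ (p - 1) * (y ^ (p + q - 1) * exp (-((b * t + c) * y))) =
      y ^ (p + q - 1) * exp (-(c * y)) * (t ^ (p - 1) * exp (-(b * y * t))) := by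
  have : exp (-((b * t + c) * y)) = exp (-(c * y)) * exp (-(b * y * t)) := by
    rw [← exp_add]; ring_nf
  rw [this]; ring

lemma integral_rpow_mul_rpow_mul_exp_neg_fst (hp : 0 < p) (hb : 0 < b) {y : ℝ} (hy : 0 < y) :
    ∫ t in Ioi 0, t ^ (p - 1) * (y ^ (p + q - 1) * exp (-((b * t + c) * y))) =
      Gamma p * b ^ (-p) * (y ^ (q - 1) * exp (-(c * y))) := by
  simp_rw [rpow_mul_rpow_mul_exp_neg_eq]
  rw [integral_const_mul, integral_rpow_mul_exp_neg_mul_Ioi hp (mul_pos hb hy), one_div,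
    inv_rpow (by positivity), mul_rpow hb.le hy.le, mul_inv, ← rpow_neg hb.le, ← rpow_neg hy.le]
  calc y ^ (p + q - 1) * exp (-(c * y)) * (b ^ (-p) * y ^ (-p) * Gamma p)
      = Gamma p * b ^ (-p) * ((y ^ (p + q - 1) * y ^ (-p)) * exp (-(c * y))) := by ring
    _ = _ := by rw [← rpow_add hy]; ring_nf

lemma integrable_rpow_mul_rpow_mul_exp_neg (hp : 0 < p) (hq : 0 < q) (hb : 0 < b)
    (hc : 0 < c) :
    Integrable (Function.uncurry fun t y : ℝ => t ^ (p - 1) * (y ^ (p + q - 1) *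
      exp (-((b * t + c) * y)))) ((volume.restrict (Ioi 0)).prod (volume.restrict (Ioi 0))) := by
  refine (integrable_prod_iff' ?_).2 ⟨?_, ?_⟩
  · exact (by fun_prop : Measurable _).aestronglyMeasurable
  · refine (ae_restrict_iff' measurableSet_Ioi).2 (ae_of_all _ fun y hy => ?_)
    simp_rw [Function.uncurry_apply_pair, rpow_mul_rpow_mul_exp_neg_eq]
    exact (integrableOn_rpow_mul_exp_neg_mul hp (mul_pos hb hy)).const_mul _
  · refine IntegrableOn.congr_fun (s := Ioi 0)
      ((integrableOn_rpow_mul_exp_neg_mul hq hc).const_mul (Gamma p * b ^ (-p)))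
      (fun y hy => ?_) measurableSet_Ioi
    simp only [Function.uncurry_apply_pair]
    rw [← integral_rpow_mul_rpow_mul_exp_neg_fst hp hb hy]
    refine setIntegral_congr_fun measurableSet_Ioi fun t ht => ?_
    have : (0 : ℝ) < y := hy
    have : (0 : ℝ) < t := ht
    rw [norm_of_nonneg (by positivity)]

lemma integral_rpow_mul_rpow_mul_exp_neg_snd (hpq : 0 < p + q) (hb : 0 < b) (hc : 0 < c) {t : ℝ}
    (ht : 0 < t) :
    ∫ y in Ioi 0, t ^ (p - 1) * (y ^ (p + q - 1) * exp (-((b * t + c) * y))) =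
      Gamma (p + q) * (t ^ (p - 1) * (b * t + c) ^ (-(p + q))) := by
  rw [integral_const_mul, integral_rpow_mul_exp_neg_mul_Ioi hpq (by positivity), one_div,
    inv_rpow (by positivity), ← rpow_neg (by positivity)]
  ring

lemma integrableOn_rpow_mul_add_rpow_neg (hp : 0 < p) (hq : 0 < q) (hb : 0 < b) (hc : 0 < c) :
    IntegrableOn (fun t : ℝ => t ^ (p - 1) * (b * t + c) ^ (-(p + q))) (Ioi 0) := by
  have hΓ : 0 < Gamma (p + q) := Gamma_pos_of_pos (by linarith)
  refine IntegrableOn.congr_fun (s := Ioi 0)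
    ((integrable_rpow_mul_rpow_mul_exp_neg hp hq hb hc).integral_prod_left.const_mul
      (Gamma (p + q))⁻¹) (fun t ht => ?_) measurableSet_Ioi
  simp only [Function.uncurry_apply_pair]
  rw [integral_rpow_mul_rpow_mul_exp_neg_snd (by linarith) hb hc ht, inv_mul_cancel_left₀ hΓ.ne']

theorem integral_rpow_mul_add_rpow_neg (hp : 0 < p) (hq : 0 < q) (hb : 0 < b) (hc : 0 < c) :
    ∫ t in Ioi 0, t ^ (p - 1) * (b * t + c) ^ (-(p + q)) =
      Gamma p * Gamma q / (Gamma (p + q) * b ^ p * c ^ q) := by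
  have hΓ : 0 < Gamma (p + q) := Gamma_pos_of_pos (by linarith)
  calc ∫ t in Ioi 0, t ^ (p - 1) * (b * t + c) ^ (-(p + q))
      = (Gamma (p + q))⁻¹ * ∫ t in Ioi 0, ∫ y in Ioi 0,
          t ^ (p - 1) * (y ^ (p + q - 1) * exp (-((b * t + c) * y))) := by
        rw [← integral_const_mul]
        refine setIntegral_congr_fun measurableSet_Ioi fun t ht => ?_
        rw [integral_rpow_mul_rpow_mul_exp_neg_snd (by linarith) hb hc ht,
          inv_mul_cancel_left₀ hΓ.ne']
    _ = (Gamma (p + q))⁻¹ *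
          ∫ y in Ioi 0, Gamma p * b ^ (-p) * (y ^ (q - 1) * exp (-(c * y))) := by
        rw [integral_integral_swap (integrable_rpow_mul_rpow_mul_exp_neg hp hq hb hc)]
        congr 1
        exact setIntegral_congr_fun measurableSet_Ioi fun y hy =>
          integral_rpow_mul_rpow_mul_exp_neg_fst hp hb hy
    _ = _ := by
        rw [integral_const_mul, integral_rpow_mul_exp_neg_mul_Ioi hq hc, rpow_neg hb.le, one_div,
          inv_rpow hc.le]
        field_simp

end BetaIntegral

noncomputable def jacobiLaplace (w x t : ℝ) : ℝ :=
  ∫ s in (-1 : ℝ)..1, exp (-2 * t * (1 + s)) * (1 - s) ^ w * (1 + s) ^ x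

lemma jacobiLaplace_nonneg (w x t : ℝ) : 0 ≤ jacobiLaplace w x t := by
  refine intervalIntegral.integral_nonneg (by norm_num) fun s hs => ?_
  have : 0 ≤ 1 - s := by linarith [hs.2]
  have : 0 ≤ 1 + s := by linarith [hs.1]
  positivity

lemma one_sub_rpow_le {w s : ℝ} (hw : 0 ≤ w) (hs : s ∈ Icc (-1 : ℝ) 1) :
    (1 - s) ^ w ≤ exp 1 * 2 ^ w * exp (-((w + 1) / 2 * (1 + s))) := by
  obtain ⟨hs₁, hs₂⟩ := hs
  calc (1 - s) ^ w ≤ (2 * exp (-((1 + s) / 2))) ^ w := by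
        gcongr
        linarith [add_one_le_exp (-((1 + s) / 2))]
    _ = 2 ^ w * exp (-((1 + s) / 2) * w) := by
        rw [mul_rpow zero_le_two (exp_nonneg _), ← exp_mul]
    _ ≤ 2 ^ w * exp (1 + -((w + 1) / 2 * (1 + s))) := by gcongr; nlinarith
    _ = _ := by rw [exp_add]; ring

theorem jacobiLaplace_le {w x t : ℝ} (ht : 0 ≤ t) (hw : 0 ≤ w) (hx : -1 < x) :
    jacobiLaplace w x t ≤ exp 1 * 2 ^ w * Gamma (x + 1) * (2 * t + (w + 1) / 2) ^ (-(x + 1)) := by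
  set r := 2 * t + (w + 1) / 2
  have hr : 0 < r := by positivity
  set g : ℝ → ℝ := fun u => u ^ (x + 1 - 1) * exp (-(r * u))
  have hg : IntegrableOn g (Ioi 0) := integrableOn_rpow_mul_exp_neg_mul (by linarith) hr
  have hg_shift : IntervalIntegrable (fun s => g (1 + s)) volume (-1) 1 := by
    have := ((intervalIntegrable_iff_integrableOn_Ioc_of_le zero_le_two).2
      (hg.mono_set Ioc_subset_Ioi_self)).comp_add_left 1
    norm_num at this
    exact this
  have hpoint : ∀ s ∈ Ioc (-1 : ℝ) 1,
      exp (-2 * t * (1 + s)) * (1 - s) ^ w * (1 + s) ^ x ≤ exp 1 * 2 ^ w * g (1 + s) := by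
    intro s hs
    have : 0 ≤ 1 + s := by linarith [hs.1]
    calc exp (-2 * t * (1 + s)) * (1 - s) ^ w * (1 + s) ^ x
        ≤ exp (-2 * t * (1 + s)) * (exp 1 * 2 ^ w * exp (-((w + 1) / 2 * (1 + s)))) *
            (1 + s) ^ x := by gcongr; exact one_sub_rpow_le hw (Ioc_subset_Icc_self hs)
      _ = exp 1 * 2 ^ w * g (1 + s) := by
          simp only [g, r, add_sub_cancel_right]
          rw [mul_comm (exp 1 * 2 ^ w) (exp _), ← mul_assoc, ← exp_add]
          ring_nf
  have hg_nonneg : ∀ u ∈ Ioi (0 : ℝ), 0 ≤ g u := fun u hu => by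
    have : (0 : ℝ) < u := hu
    positivity
  calc jacobiLaplace w x t
      = ∫ s in Ioc (-1 : ℝ) 1, exp (-2 * t * (1 + s)) * (1 - s) ^ w * (1 + s) ^ x :=
        intervalIntegral.integral_of_le (by norm_num)
    _ ≤ ∫ s in Ioc (-1 : ℝ) 1, exp 1 * 2 ^ w * g (1 + s) := by
        refine integral_mono_of_nonneg ?_ (hg_shift.1.const_mul _)
          ((ae_restrict_iff' measurableSet_Ioc).2 (ae_of_all _ hpoint))
        refine (ae_restrict_iff' measurableSet_Ioc).2 (ae_of_all _ fun s hs => ?_)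
        have : 0 ≤ 1 - s := by linarith [hs.2]
        have : 0 ≤ 1 + s := by linarith [hs.1]
        positivity
    _ = exp 1 * 2 ^ w * ∫ u in (0 : ℝ)..2, g u := by
        rw [integral_const_mul, ← intervalIntegral.integral_of_le (by norm_num),
          intervalIntegral.integral_comp_add_left]
        norm_num
    _ ≤ exp 1 * 2 ^ w * ∫ u in Ioi 0, g u := by
        gcongr
        rw [intervalIntegral.integral_of_le zero_le_two]
        exact setIntegral_mono_set hg
          ((ae_restrict_iff' measurableSet_Ioi).2 (ae_of_all _ hg_nonneg))
          Ioc_subset_Ioi_self.eventuallyLE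
    _ = _ := by
        rw [integral_rpow_mul_exp_neg_mul_Ioi (by linarith) hr, one_div, inv_rpow hr.le,
          ← rpow_neg hr.le]
        ring

lemma integral_rpow_mul_sq_le {I : ℝ → ℝ} {p q m c D : ℝ} (hp : 0 < p) (hq : 0 < q)
    (hc : 0 < c) (hpq : p + q = 2 * m) (hI0 : ∀ t ∈ Ioi (0 : ℝ), 0 ≤ I t)
    (hI : ∀ t ∈ Ioi (0 : ℝ), I t ≤ D * (2 * t + c) ^ (-m)) :
    ∫ t in Ioi 0, t ^ (p - 1) * I t ^ 2 ≤
      D ^ 2 * (Gamma p * Gamma q / (Gamma (p + q) * 2 ^ p * c ^ q)) := by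
  rw [← integral_rpow_mul_add_rpow_neg hp hq two_pos hc, ← integral_const_mul]
  refine integral_mono_of_nonneg ?_
    ((integrableOn_rpow_mul_add_rpow_neg hp hq two_pos hc).const_mul _)
    ((ae_restrict_iff' measurableSet_Ioi).2 (ae_of_all _ fun t (ht : 0 < t) => ?_))
  · exact (ae_restrict_iff' measurableSet_Ioi).2
      (ae_of_all _ fun t (ht : 0 < t) => by positivity)
  · calc t ^ (p - 1) * I t ^ 2 ≤ t ^ (p - 1) * (D * (2 * t + c) ^ (-m)) ^ 2 := by
          gcongr
          · exact hI0 t ht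
          · exact hI t ht
      _ = D ^ 2 * (t ^ (p - 1) * (2 * t + c) ^ (-(p + q))) := by
          rw [mul_pow, ← rpow_mul_natCast (by positivity), hpq]
          push_cast
          ring_nf

lemma jacobiLaplace_majorant_sq_mul_beta_le {a α β κ : ℝ} (hβa : a < β + 1)
    (hκ : 2 + 2 * |a| + 2 * |α| + 2 * |β| ≤ κ) :
    (exp 1 * 2 ^ (κ + α) * Gamma (κ + β + 1)) ^ 2 *
      (Gamma (2 * κ + 2 * a) * Gamma (2 * (β + 1 - a)) /
        (Gamma (2 * κ + 2 * a + 2 * (β + 1 - a)) * 2 ^ (2 * κ + 2 * a) *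
          ((κ + α + 1) / 2) ^ (2 * (β + 1 - a)))) ≤
    (exp 1 ^ 2 * Gamma (2 * (β + 1 - a)) * 2 ^ (2 * α - 2 * a) * (2 ^ |β|) ^ 2 *
      8 ^ (2 * (β + 1 - a))) * (Gamma (κ + 1) / (κ + 1) ^ (β - 2 * a + 2)) ^ 2 := by
  set q := 2 * (β + 1 - a)
  set p := 2 * κ + 2 * a
  set y := κ + 1
  set c := (κ + α + 1) / 2
  have := le_abs_self a; have := neg_abs_le a
  have := le_abs_self α; have := neg_abs_le α
  have := le_abs_self β; have := neg_abs_le β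
  have hq : 0 < q := by simp only [q]; linarith
  have hy : 0 < y := by simp only [y]; linarith
  have hc : 0 < c := by simp only [c]; linarith
  have hp1 : 1 < p := by simp only [p]; linarith
  have hG : Gamma (κ + β + 1) ≤ 2 ^ |β| * y ^ β * Gamma y := by
    rw [show κ + β + 1 = y + β by ring]
    exact Gamma_add_le_two_rpow_mul (by simp only [y]; linarith)
  have hratio := Gamma_div_Gamma_add_le hp1 hq.le
  have hpc : y ^ 2 / 8 ≤ (p - 1) * c := by
    simp only [y, p, c]; nlinarith
  have h2 : ((2 : ℝ) ^ (κ + α)) ^ 2 / 2 ^ p = 2 ^ (2 * α - 2 * a) := by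
    rw [← rpow_mul_natCast zero_le_two, ← rpow_sub two_pos]
    simp only [p]; push_cast; ring_nf
  have h8 : (y ^ 2 / 8) ^ (-q) = 8 ^ q * y ^ (-2 * q) := by
    rw [div_rpow (by positivity) (by norm_num), ← rpow_natCast_mul hy.le, rpow_neg (by norm_num),
      div_inv_eq_mul]
    push_cast; ring_nf
  have hpow : (y ^ β) ^ 2 * y ^ (-2 * q) = ((y ^ (β - 2 * a + 2)) ^ 2)⁻¹ := by
    rw [← rpow_mul_natCast hy.le, ← rpow_mul_natCast hy.le, ← rpow_add hy, ← rpow_neg hy.le]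
    simp only [q]; push_cast; ring_nf
  have hG0 : 0 < Gamma (κ + β + 1) := Gamma_pos_of_pos (by linarith)
  calc (exp 1 * 2 ^ (κ + α) * Gamma (κ + β + 1)) ^ 2 *
        (Gamma p * Gamma q / (Gamma (p + q) * 2 ^ p * c ^ q))
      = exp 1 ^ 2 * Gamma q * (((2 : ℝ) ^ (κ + α)) ^ 2 / 2 ^ p) * Gamma (κ + β + 1) ^ 2 *
          (Gamma p / Gamma (p + q)) * (c ^ q)⁻¹ := by
        field_simp
    _ ≤ exp 1 ^ 2 * Gamma q * (((2 : ℝ) ^ (κ + α)) ^ 2 / 2 ^ p) *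
          (2 ^ |β| * y ^ β * Gamma y) ^ 2 * (p - 1) ^ (-q) * (c ^ q)⁻¹ := by
        gcongr
    _ = exp 1 ^ 2 * Gamma q * 2 ^ (2 * α - 2 * a) * (2 ^ |β| * y ^ β * Gamma y) ^ 2 *
          ((p - 1) * c) ^ (-q) := by
        rw [h2, mul_rpow (by linarith) hc.le, rpow_neg hc.le, rpow_neg (by linarith : 0 ≤ p - 1)]
        ring
    _ ≤ exp 1 ^ 2 * Gamma q * 2 ^ (2 * α - 2 * a) * (2 ^ |β| * y ^ β * Gamma y) ^ 2 *
          (y ^ 2 / 8) ^ (-q) := by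
        gcongr _ * ?_
        exact rpow_le_rpow_of_nonpos (by positivity) hpc (by linarith)
    _ = _ := by
        rw [h8, div_pow, div_eq_mul_inv _ (_ ^ 2), ← hpow]
        ring

theorem isBigO_integral_rpow_mul_jacobiLaplace_sq {a α β : ℝ} (hβa : a < β + 1) :
    (fun κ : ℝ => (∫ t in Ioi 0, t ^ (2 * κ + 2 * a - 1) *
        jacobiLaplace (κ + α) (κ + β) t ^ 2) ^ ((1 : ℝ) / 2)) =O[atTop]
      fun κ => Gamma (κ + 1) / (κ + 1) ^ (β - 2 * a + 2) := by
  set A := exp 1 ^ 2 * Gamma (2 * (β + 1 - a)) * 2 ^ (2 * α - 2 * a) * (2 ^ |β|) ^ 2 *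
      8 ^ (2 * (β + 1 - a))
  refine IsBigO.of_bound √A ?_
  filter_upwards [eventually_ge_atTop (2 + 2 * |a| + 2 * |α| + 2 * |β|)] with κ hκ
  have := le_abs_self a; have := neg_abs_le a
  have := le_abs_self α; have := neg_abs_le α
  have := le_abs_self β; have := neg_abs_le β
  have hL2 := integral_rpow_mul_sq_le (I := jacobiLaplace (κ + α) (κ + β))
    (p := 2 * κ + 2 * a) (m := κ + β + 1) (by linarith) (by linarith : 0 < 2 * (β + 1 - a))
    (by linarith : 0 < (κ + α + 1) / 2) (by ring) (fun t _ => jacobiLaplace_nonneg _ _ _)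
    (fun t ht => jacobiLaplace_le (le_of_lt ht) (by linarith) (by linarith))
  have hy : 0 < κ + 1 := by linarith
  rw [norm_of_nonneg (rpow_nonneg (setIntegral_nonneg measurableSet_Ioi fun t (ht : 0 < t) => by
      positivity) _), norm_of_nonneg (by positivity), ← sqrt_eq_rpow,
    sqrt_le_left (by positivity)]
  calc _ ≤ _ := hL2
    _ ≤ A * (Gamma (κ + 1) / (κ + 1) ^ (β - 2 * a + 2)) ^ 2 :=
        jacobiLaplace_majorant_sq_mul_beta_le hβa hκ
    _ = (√A * (Gamma (κ + 1) / (κ + 1) ^ (β - 2 * a + 2))) ^ 2 := by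
        rw [mul_pow, sq_sqrt (by positivity)]

theorem technical_L2_integral_bound (a α β : ℝ) :
    ∃ C : ℝ, 0 < C ∧ ∀ k : ℕ,
      (k : ℝ) + 2 * a > β + 1 → β + 1 > a → (k : ℝ) + β + 1 > 0 → (k : ℝ) + α + 1 > 0 →
      (∫ t in Set.Ioi (0 : ℝ), t ^ (2 * (k : ℝ) + 2 * a - 1) *
          (∫ s in (-1 : ℝ)..1,
            Real.exp (-2 * t * (1 + s)) * (1 - s) ^ ((k : ℝ) + α) * (1 + s) ^ ((k : ℝ) + β)) ^ 2)
        ^ ((1 : ℝ) / 2)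
        ≤ C * Real.Gamma ((k : ℝ) + 1) / ((k : ℝ) + 1) ^ (β - 2 * a + 2) := by
  by_cases hβa : a < β + 1
  · obtain ⟨C, hC, hbound⟩ := bound_of_isBigO_nat_atTop
      ((isBigO_integral_rpow_mul_jacobiLaplace_sq (α := α) hβa).comp_tendsto
        tendsto_natCast_atTop_atTop)
    refine ⟨C, hC, fun k _ _ _ _ => ?_⟩
    have hg : 0 < Gamma ((k : ℝ) + 1) / ((k : ℝ) + 1) ^ (β - 2 * a + 2) := by positivity
    rw [mul_div_assoc, ← norm_of_nonneg hg.le]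
    exact (le_norm_self _).trans (hbound hg.ne')
  · exact ⟨1, one_pos, fun k _ h _ _ => absurd h hβa⟩
end
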